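/- arXiv:2604.21306 — 6 statements merged into one kernel-verified Lean document; each statement's English description precedes it below -/
import Mathlib

section
/- Suppose there exists an ordering i_1, i_2, …, i_n of the agents such that for each j, agent i_j is assigned under σ their most-preferred room among the rooms not assigned to agents i_1, …, i_{j−1}. Then the allocation σ is Pareto optimal. -/
/-- Allocation `σ'` Pareto dominates allocation `σ`: every agent weakly prefers
`σ' i` to `σ i` (equal or strictly preferred), and some agent strictly prefers it. -/
def ParetoDominates {A R : Type*} (pref : A → R → R → Prop) (σ' σ : A ≃ R) : Prop :=
  (∀ i, σ' i = σ i ∨ pref i (σ' i) (σ i)) ∧ ∃ i, pref i (σ' i) (σ i)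

/-- An allocation is Pareto optimal if no allocation Pareto dominates it. -/
def ParetoOptimal {A R : Type*} (pref : A → R → R → Prop) (σ : A ≃ R) : Prop :=
  ∀ σ' : A ≃ R, ¬ ParetoDominates pref σ' σ

/-- If there is an ordering of the agents under which σ is a serial-dictatorship
outcome (each agent in turn receives their most-preferred room among the rooms
not assigned to earlier agents), then σ is Pareto optimal. -/
theorem stmt_4 (n : ℕ) (pref : Fin n → Fin n → Fin n → Prop)
    (hpref : ∀ i, IsStrictTotalOrder (Fin n) (pref i))
    (σ : Fin n ≃ Fin n) (ord : Equiv.Perm (Fin n))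
    (h : ∀ j : Fin n, ∀ r : Fin n, (∀ k, k < j → σ (ord k) ≠ r) → r ≠ σ (ord j) →
        pref (ord j) (σ (ord j)) r) :
    ParetoOptimal pref σ := by
  rintro σ' ⟨hweak, i, hi⟩
  have hne : σ' i ≠ σ i := fun e => (hpref i).irrefl _ (e ▸ hi)
  obtain ⟨j, hj, hjmin⟩ := Finset.exists_min_image
    (Finset.univ.filter fun j => σ' (ord j) ≠ σ (ord j)) id
    ⟨ord.symm i, by simp [hne]⟩
  simp only [Finset.mem_filter, Finset.mem_univ, true_and, id] at hj hjmin
  have hk : ∀ k, k < j → σ (ord k) ≠ σ' (ord j) := by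
    intro k hkj heq
    have hkeq : σ' (ord k) = σ (ord k) := by
      by_contra hne'
      exact absurd (hjmin k hne') (not_le.mpr hkj)
    have : k = j := ord.injective (σ'.injective (by rw [hkeq, heq]))
    exact absurd (this ▸ hkj) (lt_irrefl j)
  have hp := h j (σ' (ord j)) hk hj
  rcases hweak (ord j) with he | hp'
  · exact hj he
  · exact (hpref (ord j)).irrefl _ ((hpref (ord j)).trans _ _ _ hp hp')
end

section
/- If an allocation σ is Pareto optimal, then there exists an ordering i_1, i_2, …, i_n of the agents such that for each j, agent i_j is assigned under σ their most-preferred room among the rooms not assigned to agents i_1, …, i_{j−1}. (Every Pareto-optimal allocation is realizable as a serial-dictatorship outcome for some order of the agents.) -/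
open Function Set Equiv

theorem Function.exists_mem_periodicPts_of_mapsTo {α : Type*} [Finite α] {f : α → α}
    {s : Set α} (hs : s.Nonempty) (hf : MapsTo f s s) : ∃ y ∈ s, y ∈ periodicPts f := by
  obtain ⟨x, hx⟩ := hs
  obtain ⟨a, b, hab, heq⟩ := Finite.exists_ne_map_eq_of_infinite (fun k : ℕ => f^[k] x)
  wlog hlt : a < b generalizing a b
  · exact this b a hab.symm heq.symm (by omega)
  refine ⟨f^[a] x, hf.iterate a hx, mk_mem_periodicPts (n := b - a) (by omega) ?_⟩
  change f^[b - a] (f^[a] x) = f^[a] x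
  rw [← iterate_add_apply, Nat.sub_add_cancel hlt.le]
  exact heq.symm

theorem Function.exists_perm_ne_one_of_mapsTo {α : Type*} [Finite α] {f : α → α} {s : Set α}
    (hs : s.Nonempty) (hf : MapsTo f s s) (hfix : ∀ x ∈ s, f x ≠ x) :
    ∃ τ : Perm α, τ ≠ 1 ∧ ∀ x, τ x ≠ x → x ∈ s ∧ τ x = f x := by
  classical
  -- `g` fixes every point outside `s`, so the permutation `τ` below moves only points of `s`.
  set g : α → α := s.piecewise f id
  have hg : MapsTo g s s := fun x hx => by simpa [g, hx] using hf hx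
  obtain ⟨y, hys, hy⟩ := exists_mem_periodicPts_of_mapsTo hs hg
  set τ : Perm α := Perm.ofSubtype (bijOn_periodicPts g).equiv
  have hτ : ∀ x, τ x ≠ x → τ x = g x := by
    intro x hx
    by_cases hxP : x ∈ periodicPts g
    · exact Perm.ofSubtype_apply_of_mem _ hxP
    · exact absurd (Perm.ofSubtype_apply_of_not_mem _ hxP) hx
  refine ⟨τ, fun h1 => ?_, fun x hx => ?_⟩
  · have hτy : τ y = g y := Perm.ofSubtype_apply_of_mem _ hy
    exact hfix y hys (by simpa [h1, g, hys] using hτy.symm)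
  · have hxs : x ∈ s := by
      by_contra hxs
      exact hx (by simpa [g, hxs] using hτ x hx)
    exact ⟨hxs, by simpa [g, hxs] using hτ x hx⟩

namespace ParetoOptimal

variable {A R : Type*} {pref : A → R → R → Prop} {σ : A ≃ R}

theorem perm_eq_one_of_forall_pref (hσ : ParetoOptimal pref σ) (τ : Perm A)
    (hτ : ∀ i, τ i ≠ i → pref i (σ (τ i)) (σ i)) : τ = 1 := by
  by_contra hne
  obtain ⟨i, hi⟩ : ∃ i, τ i ≠ i := by simpa [Perm.ext_iff] using hne
  refine hσ (τ.trans σ) ⟨fun j => ?_, i, hτ i hi⟩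
  by_cases hj : τ j = j
  · exact Or.inl (congrArg σ hj)
  · exact Or.inr (hτ j hj)

theorem exists_mem_forall_pref [Finite A] (hpref : ∀ i, Std.Trichotomous (pref i))
    (hσ : ParetoOptimal pref σ) (S : Set A) (hS : S.Nonempty) :
    ∃ i ∈ S, ∀ j ∈ S, j ≠ i → pref i (σ i) (σ j) := by
  by_contra! h
  have hbetter : ∀ i ∈ S, ∃ j ∈ S, j ≠ i ∧ pref i (σ j) (σ i) := by
    intro i hi
    obtain ⟨j, hj, hji, hnot⟩ := h i hi
    refine ⟨j, hj, hji, ?_⟩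
    by_contra hlt
    exact hji (σ.injective ((hpref i).trichotomous _ _ hnot hlt)).symm
  choose! g hgS hgne hgpref using hbetter
  obtain ⟨τ, hτ1, hτ⟩ := exists_perm_ne_one_of_mapsTo hS hgS hgne
  refine hτ1 (hσ.perm_eq_one_of_forall_pref τ fun i hi => ?_)
  obtain ⟨hiS, hτi⟩ := hτ i hi
  rw [hτi]
  exact hgpref i hiS

end ParetoOptimal

theorem Finset.exists_list_nodup_pairwise {α : Type*} [DecidableEq α] {R : α → α → Prop}
    (hR : ∀ s : Finset α, s.Nonempty → ∃ i ∈ s, ∀ j ∈ s, j ≠ i → R i j) (s : Finset α) :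
    ∃ l : List α, l.Nodup ∧ l.toFinset = s ∧ l.Pairwise R := by
  induction s using Finset.strongInduction with
  | H s ih =>
    rcases s.eq_empty_or_nonempty with rfl | hs
    · exact ⟨[], List.nodup_nil, rfl, List.Pairwise.nil⟩
    obtain ⟨i, hi, hiR⟩ := hR s hs
    obtain ⟨l, hnd, hl, hpw⟩ := ih (s.erase i) (Finset.erase_ssubset hi)
    have hmem : ∀ j, j ∈ l ↔ j ≠ i ∧ j ∈ s := by
      intro j; rw [← List.mem_toFinset, hl, Finset.mem_erase]
    refine ⟨i :: l, List.nodup_cons.mpr ⟨fun h => ((hmem i).mp h).1 rfl, hnd⟩, ?_,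
      List.pairwise_cons.mpr ⟨fun j hj => hiR j ((hmem j).mp hj).2 ((hmem j).mp hj).1, hpw⟩⟩
    rw [List.toFinset_cons, hl, Finset.insert_erase hi]

theorem Fintype.exists_equiv_fin_pairwise {α : Type*} [Fintype α] {R : α → α → Prop}
    (hR : ∀ s : Finset α, s.Nonempty → ∃ i ∈ s, ∀ j ∈ s, j ≠ i → R i j) :
    ∃ e : Fin (Fintype.card α) ≃ α, ∀ ⦃j k⦄, j < k → R (e j) (e k) := by
  classical
  obtain ⟨l, hnd, hl, hpw⟩ := Finset.exists_list_nodup_pairwise hR Finset.univ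
  have hlen : l.length = Fintype.card α := by
    rw [← List.toFinset_card_of_nodup hnd, hl, Finset.card_univ]
  refine ⟨(finCongr hlen.symm).trans
    (hnd.getEquivOfForallMemList l fun x => by simp [← List.mem_toFinset, hl]), ?_⟩
  intro j k hjk
  simpa using List.pairwise_iff_getElem.mp hpw j k (by omega) (by omega) hjk

/-- Every Pareto-optimal allocation is a serial-dictatorship outcome for some
ordering of the agents: each agent in turn receives their most-preferred room
among the rooms not assigned to earlier agents. -/
theorem stmt_5 (n : ℕ) (pref : Fin n → Fin n → Fin n → Prop)
    (hpref : ∀ i, IsStrictTotalOrder (Fin n) (pref i))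
    (σ : Fin n ≃ Fin n) (hσ : ParetoOptimal pref σ) :
    ∃ ord : Equiv.Perm (Fin n),
      ∀ j : Fin n, ∀ r : Fin n, (∀ k, k < j → σ (ord k) ≠ r) → r ≠ σ (ord j) →
        pref (ord j) (σ (ord j)) r := by
  obtain ⟨e, he⟩ := Fintype.exists_equiv_fin_pairwise (R := fun i j => pref i (σ i) (σ j))
    fun S hS => hσ.exists_mem_forall_pref (fun i => (hpref i).toTrichotomous) S
      (Finset.coe_nonempty.mpr hS)
  set ord : Perm (Fin n) := (finCongr (Fintype.card_fin n).symm).trans e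
  refine ⟨ord, fun j r hk hr => ?_⟩
  obtain ⟨k, rfl⟩ := (ord.trans σ).surjective r
  have hjk : j < k := lt_of_le_of_ne (not_lt.mp fun h => hk k h rfl) fun h => hr (h ▸ rfl)
  exact he (by simpa using hjk)
end

section
/- Suppose the set of rooms is partitioned into nonempty sets S_1, S_2, …, S_k such that for each j, every agent who is assigned under σ a room in S_j receives their most-preferred room among the rooms not in S_1 ∪ ⋯ ∪ S_{j−1}. Then σ is Pareto optimal. (This is the invariant underlying the soundness of inverse-TTC enumeration: executing the squared layers as TTC cycles reproduces σ and σ admits no Pareto improvement.) -/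
/-- If the rooms are partitioned into nonempty layers S_1, …, S_k such that each
agent assigned a room in S_j receives their most-preferred room among the rooms
not in S_1 ∪ ⋯ ∪ S_{j-1}, then σ is Pareto optimal. -/
theorem stmt_6 (n k : ℕ) (pref : Fin n → Fin n → Fin n → Prop)
    (hpref : ∀ i, IsStrictTotalOrder (Fin n) (pref i))
    (σ : Fin n ≃ Fin n) (S : Fin k → Finset (Fin n))
    (hne : ∀ j, (S j).Nonempty)
    (hdisj : ∀ j l, j ≠ l → Disjoint (S j) (S l))
    (hcover : ∀ r : Fin n, ∃ j, r ∈ S j)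
    (h : ∀ j : Fin k, ∀ i : Fin n, σ i ∈ S j →
        ∀ r : Fin n, (∀ l, l < j → r ∉ S l) → r ≠ σ i → pref i (σ i) r) :
    ParetoOptimal pref σ := by
  rintro σ' ⟨hweak, i0, hi0⟩
  have irr : ∀ i r, ¬ pref i r r := fun i r => (hpref i).irrefl r
  have asym : ∀ i a b, pref i a b → ¬ pref i b a := fun i a b hab hba =>
    irr i a ((hpref i).trans _ _ _ hab hba)
  choose lay hlay using hcover
  have layuniq : ∀ r j, r ∈ S j → j = lay r := by
    intro r j hr
    by_contra hne'
    exact Finset.disjoint_left.mp (hdisj j (lay r) hne') hr (hlay r)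
  have key : ∀ i, pref i (σ' i) (σ i) → lay (σ' i) < lay (σ i) := by
    intro i hp
    by_contra hlt
    push_neg at hlt
    have hne2 : σ' i ≠ σ i := by
      intro e; rw [e] at hp; exact irr i _ hp
    refine asym i _ _ hp (h (lay (σ i)) i (hlay _) (σ' i) ?_ hne2)
    intro l hl hmem
    rw [← layuniq (σ' i) l hmem] at hlt
    exact absurd hl hlt.not_gt
  classical
  set T := Finset.univ.filter (fun i => pref i (σ' i) (σ i)) with hT
  have hTne : T.Nonempty := ⟨i0, by simp [hT, hi0]⟩
  obtain ⟨i, hiT, hmin⟩ := T.exists_min_image (fun i => lay (σ' i)) hTne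
  simp only [hT, Finset.mem_filter, Finset.mem_univ, true_and] at hiT
  set i' := σ.symm (σ' i) with hi'
  have hσi' : σ i' = σ' i := σ.apply_symm_apply _
  have hne2 : σ' i ≠ σ i := by
    intro e; rw [e] at hiT; exact irr i _ hiT
  have hii' : i' ≠ i := fun e => hne2 (by rw [← hσi', e])
  have h1 : σ' i' ≠ σ i' := fun e => hii' (σ'.injective (e.trans hσi'))
  have hp' : pref i' (σ' i') (σ i') := (hweak i').resolve_left h1
  have hk := key i' hp'
  rw [hσi'] at hk
  have hm := hmin i' (by simp [hT, hp'])
  exact absurd hk (not_lt.mpr hm)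
end

section
/- If an allocation σ is Pareto optimal, then the set of rooms can be partitioned into nonempty sets S_1, S_2, …, S_k such that for each j, every agent who is assigned under σ a room in S_j receives their most-preferred room among the rooms not in S_1 ∪ ⋯ ∪ S_{j−1}. (Every Pareto-optimal allocation decomposes into the rounds of a TTC execution, which underlies the completeness of inverse-TTC enumeration.) -/
lemma exists_top {α : Type*} (r : α → α → Prop) (h : IsStrictTotalOrder α r)
    (s : Finset α) (hs : s.Nonempty) : ∃ t ∈ s, ∀ x ∈ s, x ≠ t → r t x := by
  classical
  haveI := h
  letI : LinearOrder α := linearOrderOfSTO r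
  refine ⟨s.min' hs, s.min'_mem hs, fun x hx hne => ?_⟩
  exact lt_of_le_of_ne (s.min'_le x hx) (Ne.symm hne)

/-- Key lemma: in any nonempty set `T` of rooms, some agent assigned a room in `T`
receives their most-preferred room within `T`. -/
lemma key {n : ℕ} (pref : Fin n → Fin n → Fin n → Prop)
    (hpref : ∀ i, IsStrictTotalOrder (Fin n) (pref i))
    (σ : Fin n ≃ Fin n) (hσ : ParetoOptimal pref σ)
    (T : Finset (Fin n)) (hT : T.Nonempty) :
    ∃ i, σ i ∈ T ∧ ∀ r ∈ T, r ≠ σ i → pref i (σ i) r := by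
  classical
  by_contra hcon
  push_neg at hcon
  -- top choice function
  have htop : ∀ i : Fin n, ∃ t ∈ T, ∀ x ∈ T, x ≠ t → pref i t x :=
    fun i => exists_top (pref i) (hpref i) T hT
  choose t htmem htbest using htop
  -- every agent assigned in T does not get their top
  have hne : ∀ i : Fin n, σ i ∈ T → t i ≠ σ i := by
    intro i hi heq
    obtain ⟨r, hrT, hrne, hnp⟩ := hcon i hi
    exact hnp (heq ▸ htbest i r hrT (heq ▸ hrne))
  set g : Fin n → Fin n := fun i => σ.symm (t i) with hg
  have hgT : ∀ i, σ i ∈ T → σ (g i) ∈ T := by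
    intro i _; simpa [hg] using htmem i
  obtain ⟨r0, hr0⟩ := hT
  set i0 : Fin n := σ.symm r0 with hi0
  have hi0T : σ i0 ∈ T := by simpa [hi0]
  have hiter : ∀ m : ℕ, σ (g^[m] i0) ∈ T := by
    intro m
    induction m with
    | zero => simpa using hi0T
    | succ m ih => rw [Function.iterate_succ_apply']; exact hgT _ ih
  -- find a cycle
  obtain ⟨a, b, hab, heq⟩ := Finite.exists_ne_map_eq_of_infinite (fun m : ℕ => g^[m] i0)
  wlog hlt : a < b generalizing a b
  · exact this b a hab.symm heq.symm (by omega)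
  set j : Fin n := g^[a] i0 with hj
  set p : ℕ := b - a with hp
  have hppos : 0 < p := by omega
  have hcyc : g^[p] j = j := by
    rw [hj, ← Function.iterate_add_apply]
    have : p + a = b := by omega
    rw [this]; exact heq.symm
  set C : Set (Fin n) := {x | ∃ m, g^[m] j = x} with hC
  have hjC : j ∈ C := ⟨0, rfl⟩
  have hmaps : ∀ x ∈ C, g x ∈ C := by
    rintro x ⟨m, rfl⟩
    exact ⟨m + 1, by rw [Function.iterate_succ_apply']⟩
  have hCT : ∀ x ∈ C, σ x ∈ T := by
    rintro x ⟨m, rfl⟩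
    rw [hj, ← Function.iterate_add_apply]
    exact hiter _
  have hsurj : Set.SurjOn g C C := by
    rintro x ⟨m, rfl⟩
    refine ⟨g^[m + p - 1] j, ⟨m + p - 1, rfl⟩, ?_⟩
    have h1 : g (g^[m + p - 1] j) = g^[m + p] j := by
      rw [← Function.iterate_succ_apply' g (m + p - 1) j]
      have h2 : m + p - 1 + 1 = m + p := by omega
      simp only [Nat.succ_eq_add_one]; rw [h2]
    rw [h1, Function.iterate_add_apply, hcyc]
  have hfin : C.Finite := Set.toFinite C
  have hbij : Set.BijOn g C C :=
    (hfin.surjOn_iff_bijOn_of_mapsTo hmaps).mp hsurj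
  have hinjC : Set.InjOn g C := hbij.injOn
  -- define the trading permutation
  set h' : Fin n → Fin n := fun x => if x ∈ C then g x else x with hh'
  have h'inj : Function.Injective h' := by
    intro x y hxy
    by_cases hx : x ∈ C <;> by_cases hy : y ∈ C <;> simp [hh', hx, hy] at hxy
    · exact hinjC hx hy hxy
    · exact absurd (hxy ▸ hmaps x hx) hy
    · exact absurd (hxy ▸ hmaps y hy) (hxy ▸ hx)
    · exact hxy
  have h'bij : Function.Bijective h' := Finite.injective_iff_bijective.mp h'inj
  set e : Fin n ≃ Fin n := Equiv.ofBijective h' h'bij with he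
  set σ' : Fin n ≃ Fin n := e.trans σ with hσ'
  have hσ'val : ∀ x, σ' x = σ (h' x) := fun x => rfl
  have hCimp : ∀ x ∈ C, pref x (σ' x) (σ x) := by
    intro x hx
    have h1 : σ' x = t x := by
      rw [hσ'val]; simp [hh', hx, hg]
    rw [h1]
    exact htbest x (σ x) (hCT x hx) (fun h => hne x (hCT x hx) h.symm)
  refine hσ σ' ⟨fun x => ?_, ⟨j, hCimp j hjC⟩⟩
  by_cases hx : x ∈ C
  · exact Or.inr (hCimp x hx)
  · left; rw [hσ'val]; simp [hh', hx]

/-- Recursive construction of the layers within a set `T` of rooms. -/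
lemma build {n : ℕ} (pref : Fin n → Fin n → Fin n → Prop)
    (hpref : ∀ i, IsStrictTotalOrder (Fin n) (pref i))
    (σ : Fin n ≃ Fin n) (hσ : ParetoOptimal pref σ) :
    ∀ T : Finset (Fin n),
    ∃ (k : ℕ) (S : Fin k → Finset (Fin n)),
      (∀ j, (S j).Nonempty) ∧
      (∀ j l, j ≠ l → Disjoint (S j) (S l)) ∧
      (∀ r ∈ T, ∃ j, r ∈ S j) ∧
      (∀ j, S j ⊆ T) ∧
      (∀ j : Fin k, ∀ i : Fin n, σ i ∈ S j →
        ∀ r ∈ T, (∀ l, l < j → r ∉ S l) → r ≠ σ i → pref i (σ i) r) := by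
  classical
  intro T
  induction T using Finset.strongInduction with
  | _ T ih =>
  rcases T.eq_empty_or_nonempty with rfl | hT
  · exact ⟨0, Fin.elim0, fun j => j.elim0, fun j => j.elim0, by simp, fun j => j.elim0,
      fun j => j.elim0⟩
  · set S0 : Finset (Fin n) :=
      T.filter (fun r => ∀ x ∈ T, x ≠ r → pref (σ.symm r) r x) with hS0
    have hS0T : S0 ⊆ T := Finset.filter_subset _ _
    have hS0ne : S0.Nonempty := by
      obtain ⟨i, hiT, hitop⟩ := key pref hpref σ hσ T hT
      refine ⟨σ i, Finset.mem_filter.mpr ⟨hiT, ?_⟩⟩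
      simpa using hitop
    obtain ⟨k', S', hne', hdisj', hcov', hsub', htop'⟩ :=
      ih (T \ S0) (Finset.sdiff_ssubset hS0T hS0ne)
    refine ⟨k' + 1, Fin.cons S0 S', ?_, ?_, ?_, ?_, ?_⟩
    · intro j
      refine Fin.cases ?_ ?_ j
      · simpa using hS0ne
      · intro l; simpa using hne' l
    · intro j l hjl
      obtain rfl | ⟨j', rfl⟩ := Fin.eq_zero_or_eq_succ j <;>
        obtain rfl | ⟨l', rfl⟩ := Fin.eq_zero_or_eq_succ l
      · exact absurd rfl hjl
      · simp only [Fin.cons_zero, Fin.cons_succ]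
        exact Finset.disjoint_left.mpr fun a ha ha' =>
          (Finset.mem_sdiff.mp (hsub' l' ha')).2 ha
      · simp only [Fin.cons_zero, Fin.cons_succ]
        exact Finset.disjoint_left.mpr fun a ha ha' =>
          (Finset.mem_sdiff.mp (hsub' j' ha)).2 ha'
      · simp only [Fin.cons_succ]
        exact hdisj' j' l' (fun h => hjl (by rw [h]))
    · intro r hr
      by_cases hrS0 : r ∈ S0
      · exact ⟨0, by simpa using hrS0⟩
      · obtain ⟨j, hj⟩ := hcov' r (Finset.mem_sdiff.mpr ⟨hr, hrS0⟩)
        exact ⟨j.succ, by simpa using hj⟩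
    · intro j
      refine Fin.cases ?_ ?_ j
      · simpa using hS0T
      · intro l
        simpa using (hsub' l).trans (Finset.sdiff_subset)
    · intro j i hij r hrT hrl hrne
      obtain rfl | ⟨j', rfl⟩ := Fin.eq_zero_or_eq_succ j
      · rw [Fin.cons_zero, hS0, Finset.mem_filter] at hij
        have := hij.2 r hrT hrne
        simpa using this
      · rw [Fin.cons_succ] at hij
        have hr0 : r ∉ S0 := by
          have := hrl 0 (Fin.succ_pos j')
          simpa using this
        refine htop' j' i hij r (Finset.mem_sdiff.mpr ⟨hrT, hr0⟩) ?_ hrne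
        intro l hl
        have := hrl l.succ (by simpa [Fin.succ_lt_succ_iff] using hl)
        simpa using this

/-- If σ is Pareto optimal then the rooms can be partitioned into nonempty layers
S_1, …, S_k such that each agent assigned a room in S_j receives their
most-preferred room among the rooms not in S_1 ∪ ⋯ ∪ S_{j-1}. -/
theorem stmt_7 (n : ℕ) (pref : Fin n → Fin n → Fin n → Prop)
    (hpref : ∀ i, IsStrictTotalOrder (Fin n) (pref i))
    (σ : Fin n ≃ Fin n) (hσ : ParetoOptimal pref σ) :
    ∃ (k : ℕ) (S : Fin k → Finset (Fin n)),
      (∀ j, (S j).Nonempty) ∧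
      (∀ j l, j ≠ l → Disjoint (S j) (S l)) ∧
      (∀ r : Fin n, ∃ j, r ∈ S j) ∧
      (∀ j : Fin k, ∀ i : Fin n, σ i ∈ S j →
        ∀ r : Fin n, (∀ l, l < j → r ∉ S l) → r ≠ σ i → pref i (σ i) r) := by
  obtain ⟨k, S, h1, h2, h3, _, h5⟩ := build pref hpref σ hσ Finset.univ
  exact ⟨k, S, h1, h2, fun r => h3 r (Finset.mem_univ r),
    fun j i hij r hrl => h5 j i hij r (Finset.mem_univ r) hrl⟩
end

section
/- Let σ be a Pareto-optimal allocation and suppose agent i₀ receives under σ their overall most-preferred room r₀ = σ(i₀). Then the restriction of σ to the remaining agents is Pareto optimal for the reduced instance in which agent i₀ and room r₀ are removed and each remaining agent's preference order is ≻_i restricted to the remaining rooms. -/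
/-- If σ is Pareto optimal and agent i₀ receives their overall most-preferred
room r₀ = σ i₀, then the restriction of σ to the remaining agents is Pareto
optimal for the reduced instance with i₀ and r₀ removed and preferences
restricted to the remaining rooms. -/
theorem stmt_8 (n : ℕ) (pref : Fin n → Fin n → Fin n → Prop)
    (hpref : ∀ i, IsStrictTotalOrder (Fin n) (pref i))
    (σ : Fin n ≃ Fin n) (hσ : ParetoOptimal pref σ)
    (i₀ : Fin n) (htop : ∀ r : Fin n, r ≠ σ i₀ → pref i₀ (σ i₀) r) :
    ParetoOptimal
      (fun (i : {i : Fin n // i ≠ i₀}) (r r' : {r : Fin n // r ≠ σ i₀}) =>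
        pref i.1 r.1 r'.1)
      (σ.subtypeEquiv (fun i => not_congr σ.apply_eq_iff_eq.symm)) := by
  rintro σ' ⟨hweak, i, hstrict⟩
  -- extend σ' to a full allocation τ sending i₀ to σ i₀
  set f : {x : Fin n // ¬ x ≠ i₀} ≃ {x : Fin n // ¬ x ≠ σ i₀} :=
    { toFun := fun _ => ⟨σ i₀, by simp⟩
      invFun := fun _ => ⟨i₀, by simp⟩
      left_inv := by rintro ⟨x, hx⟩; simp at hx; simp [hx]
      right_inv := by rintro ⟨x, hx⟩; simp at hx; simp [hx] } with hf
  set τ : Fin n ≃ Fin n := Equiv.subtypeCongr σ' f with hτ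
  have hτ_ne : ∀ (j : Fin n) (h : j ≠ i₀), τ j = (σ' ⟨j, h⟩ : Fin n) := by
    intro j h
    simp [hτ, Equiv.subtypeCongr, h]
  have hτ_i₀ : τ i₀ = σ i₀ := by
    simp [hτ, Equiv.subtypeCongr, hf]
  refine hσ τ ⟨?_, ?_⟩
  · intro j
    by_cases h : j = i₀
    · subst h; left; exact hτ_i₀
    · rw [hτ_ne j h]
      rcases hweak ⟨j, h⟩ with h' | h'
      · left; rw [Subtype.ext_iff] at h'; simpa using h'
      · right; simpa using h'
  · exact ⟨i.1, by rw [hτ_ne i.1 i.2]; simpa using hstrict⟩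
end

section
/- An allocation σ is Pareto optimal if and only if there exists an ordering i_1, i_2, …, i_n of the agents such that for each j, agent i_j is assigned under σ their most-preferred room among the rooms not assigned to agents i_1, …, i_{j−1}. (The Pareto-optimal allocations are exactly the serial-dictatorship outcomes over all orders of the agents.) -/
open Function Set Equiv

def IsSerialDictatorship {ι A R : Type*} [LT ι] (pref : A → R → R → Prop) (σ : A ≃ R)
    (ord : ι ≃ A) : Prop :=
  ∀ j r, (∀ k, k < j → σ (ord k) ≠ r) → r ≠ σ (ord j) → pref (ord j) (σ (ord j)) r

theorem Function.exists_iterate_mem_periodicPts {α : Type*} [Finite α] (f : α → α) (a : α) :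
    ∃ k, f^[k] a ∈ periodicPts f := by
  obtain ⟨k, l, hkl, heq⟩ := Finite.exists_ne_map_eq_of_infinite (fun k : ℕ => f^[k] a)
  wlog hlt : k < l generalizing k l
  · exact this l k hkl.symm heq.symm (by omega)
  refine ⟨k, mk_mem_periodicPts (n := l - k) (by omega) ?_⟩
  rw [IsPeriodicPt, IsFixedPt, ← iterate_add_apply, Nat.sub_add_cancel hlt.le]
  exact heq.symm

theorem Finite.exists_perm_ne_one_of_forall_exists_rel {α : Type*} [Finite α]
    {r : α → α → Prop} {s : Set α} (hs : s.Nonempty)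
    (h : ∀ x ∈ s, ∃ y ∈ s, y ≠ x ∧ r x y) :
    ∃ π : Perm α, π ≠ 1 ∧ ∀ x, π x ≠ x → r x (π x) := by
  classical
  choose! f hfs hfne hfr using h
  set g := s.piecewise f id
  have hgs : MapsTo g s s := fun x hx => by simpa [g, hx] using hfs x hx
  let π := Perm.ofSubtype ((bijOn_periodicPts g).equiv g)
  have hπ : ∀ x ∈ periodicPts g, π x = g x := fun x hx => Perm.ofSubtype_apply_of_mem _ hx
  have hπs : ∀ x, π x ≠ x → x ∈ s ∧ π x = f x := by
    intro x hx
    by_cases hper : x ∈ periodicPts g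
    · by_cases hxs : x ∈ s
      · simp [hπ x hper, g, hxs]
      · simp [hπ x hper, g, hxs] at hx
    · exact absurd (Perm.ofSubtype_apply_of_not_mem _ hper) hx
  obtain ⟨a, ha⟩ := hs
  obtain ⟨k, hk⟩ := exists_iterate_mem_periodicPts g a
  have hbs : g^[k] a ∈ s := hgs.iterate k ha
  refine ⟨π, fun h1 => hfne _ hbs ?_, fun x hx => ?_⟩
  · simpa [hπ _ hk, g, hbs] using Perm.ext_iff.mp h1 (g^[k] a)
  · obtain ⟨hxs, hπx⟩ := hπs x hx
    exact hπx ▸ hfr x hxs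

section Greedy

variable {α : Type*} (top : Set α → α)

def greedyRest : ℕ → Set α
  | 0 => univ
  | j + 1 => greedyRest j \ {top (greedyRest j)}

theorem greedyRest_eq (j : ℕ) :
    greedyRest top j = {a | ∀ k < j, top (greedyRest top k) ≠ a} := by
  induction j with
  | zero => simp [greedyRest]
  | succ j ih =>
    ext a
    simp only [greedyRest, ih, mem_sdiff, mem_ofPred_eq, mem_singleton_iff, Nat.lt_succ_iff_lt_or_eq,
      or_imp, forall_and, forall_eq]
    exact and_congr_right fun _ => ne_comm

theorem ncard_greedyRest [Finite α] (htop : ∀ S : Set α, S.Nonempty → top S ∈ S) (j : ℕ) :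
    (greedyRest top j).ncard = Nat.card α - j := by
  induction j with
  | zero => simp [greedyRest]
  | succ j ih =>
    rcases (greedyRest top j).eq_empty_or_nonempty with h | h
    · simp only [greedyRest, h, empty_sdiff, ncard_empty] at ih ⊢
      omega
    · rw [greedyRest, ncard_sdiff_singleton_of_mem (htop _ h), ih]
      omega

end Greedy

theorem exists_equiv_fin_forall_of_forall_exists {α : Type*} [Finite α] {n : ℕ}
    (hn : Nat.card α = n) (P : Set α → α → Prop)
    (hP : ∀ S : Set α, S.Nonempty → ∃ a ∈ S, P S a) :
    ∃ e : Fin n ≃ α, ∀ j, P {a | ∀ k < j, e k ≠ a} (e j) := by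
  rcases isEmpty_or_nonempty α with hα | hα
  · obtain rfl : n = 0 := hn ▸ Nat.card_of_isEmpty
    exact ⟨equivOfIsEmpty _ _, fun j => j.elim0⟩
  choose! top hmem hP using hP
  have hne : ∀ j < n, (greedyRest top j).Nonempty := fun j hj =>
    nonempty_of_ncard_ne_zero (by rw [ncard_greedyRest top hmem]; omega)
  let e : Fin n → α := fun j => top (greedyRest top j)
  have hrest : ∀ j : Fin n, {a | ∀ k < j, e k ≠ a} = greedyRest top j := by
    intro j
    rw [greedyRest_eq]
    ext a
    exact ⟨fun h k hk => h ⟨k, hk.trans j.2⟩ hk, fun h k hk => h k hk⟩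
  have hchosen : ∀ j : Fin n, e j ∈ {a | ∀ k < j, e k ≠ a} := fun j =>
    hrest j ▸ hmem _ (hne j j.2)
  have he : Injective e := by
    intro j k hjk
    by_contra hne'
    rcases lt_or_gt_of_ne hne' with hlt | hlt
    · exact hchosen k j hlt hjk
    · exact hchosen j k hlt hjk.symm
  have hbij : Bijective e := he.bijective_of_nat_card_le (by rw [hn, Nat.card_fin])
  exact ⟨Equiv.ofBijective e hbij, fun j => hrest j ▸ hP _ (hne j j.2)⟩

section Allocation

variable {A R : Type*} {pref : A → R → R → Prop} {σ : A ≃ R}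

theorem ParetoOptimal.exists_mem_forall_pref_s13 [Finite A]
    (htri : ∀ i, Std.Trichotomous (pref i)) (hσ : ParetoOptimal pref σ) {S : Set A}
    (hS : S.Nonempty) : ∃ i ∈ S, ∀ i' ∈ S, i' ≠ i → pref i (σ i) (σ i') := by
  by_contra! h
  have henvy : ∀ i ∈ S, ∃ i' ∈ S, i' ≠ i ∧ pref i (σ i') (σ i) := by
    intro i hi
    obtain ⟨i', hi', hne, hnpref⟩ := h i hi
    refine ⟨i', hi', hne, by_contra fun hnpref' => hne ?_⟩
    exact (σ.injective ((htri i).trichotomous _ _ hnpref hnpref')).symm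
  obtain ⟨π, hπ1, hπ⟩ := Finite.exists_perm_ne_one_of_forall_exists_rel hS henvy
  obtain ⟨i, hi⟩ : ∃ i, π i ≠ i := by
    by_contra! hfix
    exact hπ1 (Perm.ext hfix)
  refine hσ (π.trans σ) ⟨fun j => ?_, i, hπ i hi⟩
  by_cases hj : π j = j
  · exact Or.inl (by simp [hj])
  · exact Or.inr (hπ j hj)

theorem ParetoOptimal.exists_isSerialDictatorship [Finite A] {n : ℕ}
    (htri : ∀ i, Std.Trichotomous (pref i)) (hσ : ParetoOptimal pref σ)
    (hn : Nat.card A = n) : ∃ ord : Fin n ≃ A, IsSerialDictatorship pref σ ord := by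
  obtain ⟨ord, hord⟩ := exists_equiv_fin_forall_of_forall_exists hn
    (fun S a => ∀ a' ∈ S, a' ≠ a → pref a (σ a) (σ a'))
    (fun S hS => hσ.exists_mem_forall_pref_s13 htri hS)
  refine ⟨ord, fun j r hr hne => ?_⟩
  have hpref := hord j (σ.symm r) (fun k hk hkr => hr k hk (by rw [hkr, σ.apply_symm_apply]))
    (fun hjr => hne (by rw [← hjr, σ.apply_symm_apply]))
  rwa [σ.apply_symm_apply] at hpref

theorem IsSerialDictatorship.paretoOptimal {ι : Type*} [Preorder ι] [WellFoundedLT ι]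
    {ord : ι ≃ A} (hpref : ∀ i, IsStrictOrder R (pref i))
    (h : IsSerialDictatorship pref σ ord) : ParetoOptimal pref σ := by
  rintro σ' ⟨hweak, i, hi⟩
  have hmoved : ord.symm i ∈ {j | σ' (ord j) ≠ σ (ord j)} := by
    simpa using fun heq => (hpref i).irrefl _ (heq ▸ hi)
  obtain ⟨j, hj, hmin⟩ := wellFounded_lt.has_min _ ⟨_, hmoved⟩
  have hfixed : ∀ k < j, σ' (ord k) = σ (ord k) := fun k hk => by
    simpa using mt (hmin k) (not_not.mpr hk)
  have hloss : pref (ord j) (σ (ord j)) (σ' (ord j)) := by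
    refine h j _ (fun k hk heq => ?_) hj
    rw [← hfixed k hk] at heq
    exact hk.ne (ord.injective (σ'.injective heq))
  have := hpref (ord j)
  rcases hweak (ord j) with heq | hgain
  · exact hj heq
  · exact irrefl _ (_root_.trans hloss hgain)

end Allocation

/-- An allocation is Pareto optimal iff it is a serial-dictatorship outcome for
some ordering of the agents: each agent in turn receives their most-preferred
room among the rooms not assigned to earlier agents. -/
theorem stmt_13 (n : ℕ) (pref : Fin n → Fin n → Fin n → Prop)
    (hpref : ∀ i, IsStrictTotalOrder (Fin n) (pref i))
    (σ : Fin n ≃ Fin n) :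
    ParetoOptimal pref σ ↔
      ∃ ord : Equiv.Perm (Fin n),
        ∀ j : Fin n, ∀ r : Fin n, (∀ k, k < j → σ (ord k) ≠ r) → r ≠ σ (ord j) →
          pref (ord j) (σ (ord j)) r := by
  constructor
  · intro hσ
    exact hσ.exists_isSerialDictatorship (fun i => (hpref i).toTrichotomous) (Nat.card_fin n)
  · rintro ⟨ord, hord⟩
    exact IsSerialDictatorship.paretoOptimal (ord := ord) (fun i => (hpref i).toIsStrictOrder) hord
end
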